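/- arXiv:2605.30452 — 6 statements merged into one kernel-verified Lean document; each statement's English description precedes it below -/
import Mathlib

section
/- Let F : ℝ^d → ℝ be L-smooth (gradient L-Lipschitz) and nonnegative. Suppose iterates satisfy w_{t+1} = w_t - η_t d_t where for each t, ⟨d_t, ∇F(w_t)⟩ ≥ c Γ_t ‖d_t‖ for some constants c > 0 and Γ_t ≥ 0, and the step size is η_t = c Γ_t / (L ‖d_t‖) (with d_t ≠ 0). Then for all T ≥ 1, ∑_{t=0}^{T-1} Γ_t² ≤ 2 L F(w_0) / c². In particular min_{t < T} Γ_t ≤ sqrt(2 L F(w_0) / (c² T)). -/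
open scoped RealInnerProductSpace Finset
open Finset

/-!
By the descent lemma for an `L`-smooth function, the step `η_t = c Γ_t / (L ‖d_t‖)`, which
minimises the quadratic upper model along `-d_t`, decreases `F` by at least `c² Γ_t² / (2L)`.
Telescoping and `F ≥ 0` bound `∑ Γ_t²` by `2 L F(w_0) / c²`, and the smallest of `T` terms is at
most their average.
-/

section Descent

variable {H : Type*} [NormedAddCommGroup H] [InnerProductSpace ℝ H] [CompleteSpace H]
  {F : H → ℝ} {gradF : H → H}

lemma hasDerivAt_comp_add_smul (hgrad : ∀ x, HasGradientAt F (gradF x) x) (x v : H) (s : ℝ) :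
    HasDerivAt (fun s : ℝ => F (x + s • v)) ⟪gradF (x + s • v), v⟫ s := by
  have hline : HasDerivAt (fun s : ℝ => x + s • v) v s := by
    simpa using ((hasDerivAt_id s).smul_const v).const_add x
  have := (hgrad (x + s • v)).hasFDerivAt.comp_hasDerivAt s hline
  simp only [InnerProductSpace.toDual_apply_apply] at this
  exact this

lemma apply_le_add_inner_add_of_lipschitzWith_gradient {L : ℝ} (hL : 0 ≤ L)
    (hgrad : ∀ x, HasGradientAt F (gradF x) x) (hlip : LipschitzWith L.toNNReal gradF)
    (x y : H) :
    F y ≤ F x + ⟪gradF x, y - x⟫ + L / 2 * ‖y - x‖ ^ 2 := by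
  set v := y - x
  -- `F` minus its quadratic upper model along the segment is antitone, as its derivative is `≤ 0`
  let g : ℝ → ℝ := fun s => F (x + s • v) - s * ⟪gradF x, v⟫ - L / 2 * s ^ 2 * ‖v‖ ^ 2
  have hg : ∀ s, HasDerivAt g (⟪gradF (x + s • v), v⟫ - ⟪gradF x, v⟫ - L * s * ‖v‖ ^ 2) s := by
    intro s
    refine (((hasDerivAt_comp_add_smul hgrad x v s).sub
      ((hasDerivAt_id s).mul_const ⟪gradF x, v⟫)).sub
      (((hasDerivAt_pow 2 s).const_mul (L / 2)).mul_const (‖v‖ ^ 2))).congr_deriv ?_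
    simp only [Nat.cast_ofNat, Nat.add_one_sub_one, pow_one, one_mul]
    ring
  have hg' : ∀ s ∈ interior (Set.Ici (0 : ℝ)),
      ⟪gradF (x + s • v), v⟫ - ⟪gradF x, v⟫ - L * s * ‖v‖ ^ 2 ≤ 0 := by
    intro s hs
    rw [interior_Ici, Set.mem_Ioi] at hs
    have hdist : ‖gradF (x + s • v) - gradF x‖ ≤ L * (s * ‖v‖) := by
      simpa [dist_eq_norm, Real.coe_toNNReal _ hL, norm_smul, abs_of_pos hs]
        using hlip.dist_le_mul (x + s • v) x
    rw [sub_nonpos]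
    calc ⟪gradF (x + s • v), v⟫ - ⟪gradF x, v⟫ = ⟪gradF (x + s • v) - gradF x, v⟫ :=
          (inner_sub_left _ _ _).symm
      _ ≤ ‖gradF (x + s • v) - gradF x‖ * ‖v‖ := real_inner_le_norm _ _
      _ ≤ L * (s * ‖v‖) * ‖v‖ := by gcongr
      _ = L * s * ‖v‖ ^ 2 := by ring
  have hanti := antitoneOn_of_hasDerivWithinAt_nonpos (convex_Ici 0)
    (fun s _ => (hg s).continuousAt.continuousWithinAt) (fun s _ => (hg s).hasDerivWithinAt) hg'
  have := hanti (Set.mem_Ici.mpr le_rfl) (Set.mem_Ici.mpr zero_le_one) zero_le_one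
  simp only [g, one_smul, zero_smul, add_zero, zero_mul, one_pow, mul_one, one_mul, v,
    add_sub_cancel, sub_zero, ne_eq, OfNat.ofNat_ne_zero, not_false_eq_true, zero_pow] at this
  linarith

lemma apply_sub_smul_le_of_le_inner {L : ℝ} (hL : 0 < L)
    (hgrad : ∀ x, HasGradientAt F (gradF x) x) (hlip : LipschitzWith L.toNNReal gradF)
    {w d : H} {s : ℝ} (hs : 0 ≤ s) (hd : d ≠ 0) (halign : s * ‖d‖ ≤ ⟪d, gradF w⟫) :
    F (w - (s / (L * ‖d‖)) • d) ≤ F w - s ^ 2 / (2 * L) := by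
  set η := s / (L * ‖d‖)
  have hdpos : 0 < ‖d‖ := norm_pos_iff.mpr hd
  have hη : 0 ≤ η := by positivity
  have hηd : η * ‖d‖ = s / L := by simp only [η]; field_simp
  have hinner : s ^ 2 / L ≤ η * ⟪d, gradF w⟫ := by
    calc s ^ 2 / L = η * (s * ‖d‖) := by rw [mul_left_comm, hηd]; ring
      _ ≤ η * ⟪d, gradF w⟫ := by gcongr
  have hdesc := apply_le_add_inner_add_of_lipschitzWith_gradient hL.le hgrad hlip w (w - η • d)
  rw [sub_sub_cancel_left, inner_neg_right, inner_smul_right, real_inner_comm, norm_neg,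
    norm_smul, Real.norm_eq_abs, abs_of_nonneg hη, hηd] at hdesc
  calc F (w - η • d) ≤ F w + -(η * ⟪d, gradF w⟫) + L / 2 * (s / L) ^ 2 := hdesc
    _ ≤ F w - s ^ 2 / L + L / 2 * (s / L) ^ 2 := by linarith
    _ = F w - s ^ 2 / (2 * L) := by field_simp; ring

end Descent

lemma sum_range_le_sub_of_le_sub {f a : ℕ → ℝ} (h : ∀ t, f (t + 1) ≤ f t - a t) (T : ℕ) :
    ∑ t ∈ range T, a t ≤ f 0 - f T :=
  calc ∑ t ∈ range T, a t ≤ ∑ t ∈ range T, (f t - f (t + 1)) :=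
        sum_le_sum fun t _ => by linarith [h t]
    _ = f 0 - f T := sum_range_sub' f T

lemma exists_lt_le_sqrt_of_sum_sq_le {x : ℕ → ℝ} {B : ℝ} {T : ℕ} (hT : 1 ≤ T)
    (h : ∑ t ∈ range T, x t ^ 2 ≤ B) : ∃ t < T, x t ≤ √(B / T) := by
  have hT' : (T : ℝ) ≠ 0 := by positivity
  obtain ⟨t, ht, hle⟩ := exists_le_of_sum_le (nonempty_range_iff.mpr (by omega))
    (show ∑ t ∈ range T, x t ^ 2 ≤ ∑ _t ∈ range T, B / T by
      rwa [sum_const, card_range, nsmul_eq_mul, mul_div_cancel₀ _ hT'])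
  exact ⟨t, mem_range.mp ht, (le_abs_self _).trans (Real.abs_le_sqrt hle)⟩

/-- descent under the sufficient alignment condition. -/
theorem stmt0 {n : ℕ} (F : EuclideanSpace ℝ (Fin n) → ℝ)
    (gradF : EuclideanSpace ℝ (Fin n) → EuclideanSpace ℝ (Fin n))
    (L c : ℝ) (hL : 0 < L) (hc : 0 < c)
    (hgrad : ∀ x, HasGradientAt F (gradF x) x)
    (hlip : LipschitzWith L.toNNReal gradF)
    (hFnonneg : ∀ x, 0 ≤ F x)
    (w d : ℕ → EuclideanSpace ℝ (Fin n)) (Γ η : ℕ → ℝ)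
    (hΓ : ∀ t, 0 ≤ Γ t)
    (hd : ∀ t, d t ≠ 0)
    (halign : ∀ t, c * Γ t * ‖d t‖ ≤ ⟪d t, gradF (w t)⟫)
    (hη : ∀ t, η t = c * Γ t / (L * ‖d t‖))
    (hupd : ∀ t, w (t + 1) = w t - η t • d t) :
    ∀ T : ℕ, 1 ≤ T →
      (∑ t ∈ range T, (Γ t) ^ 2 ≤ 2 * L * F (w 0) / c ^ 2) ∧
      ∃ t < T, Γ t ≤ Real.sqrt (2 * L * F (w 0) / (c ^ 2 * T)) := by
  intro T hT
  have hstep : ∀ t, F (w (t + 1)) ≤ F (w t) - Γ t ^ 2 * (c ^ 2 / (2 * L)) := fun t => by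
    rw [hupd, hη]
    convert apply_sub_smul_le_of_le_inner hL hgrad hlip (mul_nonneg hc.le (hΓ t)) (hd t)
      (halign t) using 2
    ring
  have hsum : ∑ t ∈ range T, Γ t ^ 2 ≤ 2 * L * F (w 0) / c ^ 2 := by
    have hdecrease := sum_range_le_sub_of_le_sub (f := fun t => F (w t)) hstep T
    rw [← sum_mul] at hdecrease
    calc ∑ t ∈ range T, Γ t ^ 2 ≤ F (w 0) / (c ^ 2 / (2 * L)) :=
          (le_div_iff₀ (by positivity)).mpr (by linarith [hFnonneg (w T)])
      _ = 2 * L * F (w 0) / c ^ 2 := by field_simp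
  refine ⟨hsum, ?_⟩
  simpa only [div_div] using exists_lt_le_sqrt_of_sum_sq_le hT hsum
end

section
/- Let J ∈ ℝ^{d×m} and let cone(J) = {Jμ : μ ≥ 0} and cone*(J) = {d : Jᵀ d ≥ 0} (entrywise). If q = Jμ with μ ≥ 0, then the Euclidean projection d of q onto the closed convex cone cone*(J) lies in cone*(J) ∩ cone(J); moreover d = Jν for some ν ≥ 0 with ‖ν‖₁ ≥ ‖μ‖₁. -/
/-!
The projection `d` of `q` onto the dual cone `cone*(J)` satisfies the variational inequality
`⟪q - d, y⟫ ≤ 0` for every `y ∈ cone*(J)`, i.e. `d - q` lies in the double dual of `cone(J)`.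
A finitely generated cone is closed: by the conic Carathéodory theorem it is a finite union of
images of orthants under injective linear maps. Hence the double dual is `cone(J)` itself, so
`d - q = Jρ` with `ρ ≥ 0`, and `d = J(μ + ρ)` with `‖μ + ρ‖₁ ≥ ‖μ‖₁`.
-/

open scoped RealInnerProductSpace
open Finset Set

section Caratheodory

variable {ι E : Type*} [Fintype ι] [AddCommGroup E] [Module ℝ E]

theorem exists_nonneg_sum_smul_eq_support_ssubset (g : ι → E) {ν u : ι → ℝ}
    (hν : ∀ i, 0 ≤ ν i) (hu : ∑ i, u i • g i = 0) (hsupp : ∀ i, ν i = 0 → u i = 0)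
    (hpos : ∃ i, 0 < u i) :
    ∃ ν' : ι → ℝ, (∀ i, 0 ≤ ν' i) ∧ ∑ i, ν' i • g i = ∑ i, ν i • g i ∧
      Function.support ν' ⊂ Function.support ν := by
  -- Move from `ν` along `-u` until the first coefficient `ν j` hits zero.
  obtain ⟨j, hj, hmin⟩ := exists_min_image (univ.filter fun i => 0 < u i)
    (fun i => ν i / u i) (by simpa [Finset.Nonempty] using hpos)
  rw [mem_filter_univ] at hj
  set θ := ν j / u j
  have hθ : 0 ≤ θ := div_nonneg (hν j) hj.le
  refine ⟨fun i => ν i - θ * u i, fun i => ?_, ?_, ?_⟩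
  · rcases lt_or_ge 0 (u i) with hi | hi
    · have := hmin i (by simpa using hi)
      rw [le_div_iff₀ hi] at this
      linarith
    · nlinarith [hν i]
  · simp [sub_smul, mul_smul, sum_sub_distrib, ← smul_sum, hu]
  · refine (Set.ssubset_iff_of_subset fun i hi => ?_).2 ⟨j, fun h => hj.ne' (hsupp j h), ?_⟩
    · by_contra h
      simp_all
    · simp [θ, hj.ne']

theorem exists_pos_sum_smul_eq_zero_of_not_linearIndepOn {g : ι → E} {s : Set ι}
    (h : ¬LinearIndepOn ℝ g s) :
    ∃ u : ι → ℝ, ∑ i, u i • g i = 0 ∧ (∀ i ∉ s, u i = 0) ∧ ∃ i, 0 < u i := by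
  obtain ⟨f, hfs, hf, hf0⟩ := linearDepOn_iff'.1 h
  rw [Finsupp.linearCombination_apply, Finsupp.sum_fintype _ _ (by simp)] at hf
  have hfs' : ∀ i ∉ s, f i = 0 := fun i hi =>
    Finsupp.notMem_support_iff.1 fun hmem => hi (Finsupp.mem_supported _ _ |>.1 hfs hmem)
  obtain ⟨i, hi⟩ := DFunLike.ne_iff.1 hf0
  by_cases hpos : ∃ j, 0 < f j
  · exact ⟨f, hf, hfs', hpos⟩
  · push Not at hpos
    refine ⟨-f, by simp [hf], fun j hj => by simp [hfs' j hj], i, ?_⟩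
    simpa using lt_of_le_of_ne (hpos i) hi

theorem exists_nonneg_sum_smul_eq_linearIndepOn (g : ι → E) (ν : ι → ℝ) (hν : ∀ i, 0 ≤ ν i) :
    ∃ c : ι → ℝ, (∀ i, 0 ≤ c i) ∧
      ∑ i, c i • g i = ∑ i, ν i • g i ∧ LinearIndepOn ℝ g (Function.support c) := by
  induction hs : Function.support ν using WellFoundedLT.induction generalizing ν with
  | ind s ih =>
    by_cases hli : LinearIndepOn ℝ g (Function.support ν)
    · exact ⟨ν, hν, rfl, hli⟩
    obtain ⟨u, hu, hus, hpos⟩ := exists_pos_sum_smul_eq_zero_of_not_linearIndepOn hli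
    obtain ⟨ν', hν', hsum, hss⟩ := exists_nonneg_sum_smul_eq_support_ssubset g hν hu
      (fun i hi => hus i (Function.notMem_support.2 hi)) hpos
    obtain ⟨c, hc, hcsum, hcli⟩ := ih _ (hs ▸ hss) ν' hν' rfl
    exact ⟨c, hc, hcsum.trans hsum, hcli⟩

theorem PointedCone.mem_hull_range_iff {g : ι → E} {x : E} :
    x ∈ PointedCone.hull ℝ (range g) ↔ ∃ ν : ι → ℝ, (∀ i, 0 ≤ ν i) ∧ ∑ i, ν i • g i = x := by
  rw [Submodule.mem_span_range_iff_exists_fun]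
  constructor
  · rintro ⟨c, rfl⟩
    exact ⟨fun i => c i, fun i => (c i).2, rfl⟩
  · rintro ⟨ν, hν, rfl⟩
    exact ⟨fun i => ⟨ν i, hν i⟩, rfl⟩

end Caratheodory

section Closed

variable {ι E : Type*} [Finite ι] [NormedAddCommGroup E] [NormedSpace ℝ E]

theorem LinearIndependent.isClosed_hull_range {g : ι → E} (hg : LinearIndependent ℝ g) :
    IsClosed (PointedCone.hull ℝ (range g) : Set E) := by
  have := Fintype.ofFinite ι
  have hemb : Topology.IsClosedEmbedding (Fintype.linearCombination ℝ g) :=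
    LinearMap.isClosedEmbedding_of_injective
      (LinearMap.ker_eq_bot.2 hg.fintypeLinearCombination_injective)
  have himage : (PointedCone.hull ℝ (range g) : Set E) =
      Fintype.linearCombination ℝ g '' Ici 0 := by
    ext x
    simp [PointedCone.mem_hull_range_iff, Fintype.linearCombination_apply, Pi.le_def]
  rw [himage]
  exact hemb.isClosedMap _ isClosed_Ici

theorem PointedCone.isClosed_hull_range (g : ι → E) :
    IsClosed (PointedCone.hull ℝ (range g) : Set E) := by
  have := Fintype.ofFinite ι
  have hunion : (PointedCone.hull ℝ (range g) : Set E) =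
      ⋃ s : {s : Set ι // LinearIndepOn ℝ g s}, PointedCone.hull ℝ (g '' s.1) := by
    refine Subset.antisymm (fun x hx => ?_) (iUnion_subset fun s => ?_)
    · obtain ⟨ν, hν, rfl⟩ := PointedCone.mem_hull_range_iff.1 hx
      obtain ⟨c, hc, hcsum, hcli⟩ := exists_nonneg_sum_smul_eq_linearIndepOn g ν hν
      refine mem_iUnion.2 ⟨⟨_, hcli⟩, hcsum ▸ Submodule.sum_mem _ fun i _ => ?_⟩
      by_cases hi : c i = 0
      · simp [hi]
      · exact Submodule.smul_mem _ (⟨c i, hc i⟩ : {r : ℝ // 0 ≤ r})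
          (PointedCone.subset_hull ⟨i, hi, rfl⟩)
    · exact Submodule.span_mono (image_subset_range g s)
  rw [hunion]
  refine isClosed_iUnion_of_finite fun s => ?_
  rw [image_eq_range]
  exact s.2.isClosed_hull_range

end Closed

section Projection

variable {E : Type*} [NormedAddCommGroup E] [InnerProductSpace ℝ E]

theorem PointedCone.inner_sub_le_zero_of_forall_norm_sub_le {K : PointedCone ℝ E} {q d y : E}
    (hd : d ∈ K) (hmin : ∀ y ∈ K, ‖q - d‖ ≤ ‖q - y‖) (hy : y ∈ K) : ⟪q - d, y⟫ ≤ 0 := by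
  have hbdd : BddBelow (range fun w : K => ‖q - w‖) :=
    ⟨0, forall_mem_range.2 fun _ => norm_nonneg _⟩
  have hinf : ‖q - d‖ = ⨅ w : K, ‖q - w‖ :=
    le_antisymm (le_ciInf fun w => hmin w w.2) (ciInf_le hbdd ⟨d, hd⟩)
  simpa using (norm_eq_iInf_iff_real_inner_le_zero K.convex hd).1 hinf (d + y) (K.add_mem hd hy)

theorem sub_mem_hull_of_forall_norm_sub_le [CompleteSpace E] {s : Set E}
    (hs : IsClosed (PointedCone.hull ℝ s : Set E)) {q d : E} (hd : d ∈ ProperCone.innerDual s)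
    (hmin : ∀ y ∈ ProperCone.innerDual s, ‖q - d‖ ≤ ‖q - y‖) :
    d - q ∈ PointedCone.hull ℝ s := by
  let C : ProperCone ℝ E := ⟨PointedCone.hull ℝ s, hs⟩
  change d - q ∈ C
  rw [← ProperCone.innerDual_innerDual C, ProperCone.mem_innerDual]
  intro y hy
  have hys : y ∈ ProperCone.innerDual s :=
    ProperCone.innerDual_le_innerDual PointedCone.subset_hull hy
  have := PointedCone.inner_sub_le_zero_of_forall_norm_sub_le
    (K := (ProperCone.innerDual s : PointedCone ℝ E)) hd hmin hys
  rw [real_inner_comm, ← neg_sub, inner_neg_left]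
  linarith

end Projection

/-- the projection of a point of `cone(J)` onto the dual cone
`cone*(J)` lies in `cone*(J) ∩ cone(J)`, with ℓ₁-larger coefficients. -/
theorem stmt2 {n m : ℕ} (g : Fin m → EuclideanSpace ℝ (Fin n))
    (μ : Fin m → ℝ) (hμ : ∀ k, 0 ≤ μ k)
    (q : EuclideanSpace ℝ (Fin n)) (hq : q = ∑ k, μ k • g k)
    (d : EuclideanSpace ℝ (Fin n))
    -- d is the Euclidean (metric) projection of q onto cone*(J):
    (hdmem : ∀ k, 0 ≤ ⟪d, g k⟫)
    (hdproj : ∀ y : EuclideanSpace ℝ (Fin n), (∀ k, 0 ≤ ⟪y, g k⟫) → ‖q - d‖ ≤ ‖q - y‖) :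
    (∀ k, 0 ≤ ⟪d, g k⟫) ∧
    ∃ ν : Fin m → ℝ, (∀ k, 0 ≤ ν k) ∧ d = ∑ k, ν k • g k ∧
      ∑ k, |μ k| ≤ ∑ k, |ν k| := by
  have hdual : ∀ y, y ∈ ProperCone.innerDual (range g) ↔ ∀ k, 0 ≤ ⟪y, g k⟫ := by
    simp [real_inner_comm]
  obtain ⟨ρ, hρ, hsum⟩ := PointedCone.mem_hull_range_iff.1 <|
    sub_mem_hull_of_forall_norm_sub_le (PointedCone.isClosed_hull_range g) ((hdual d).2 hdmem)
      fun y hy => hdproj y ((hdual y).1 hy)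
  refine ⟨hdmem, μ + ρ, fun k => add_nonneg (hμ k) (hρ k), ?_, ?_⟩
  · rw [← sub_add_cancel d q, ← hsum, hq]
    simp [add_smul, sum_add_distrib, add_comm]
  · refine sum_le_sum fun k _ => ?_
    rw [abs_of_nonneg (hμ k)]
    exact (le_add_of_nonneg_right (hρ k)).trans (le_abs_self _)
end

section
/- Convergence under monotone descent (convex case): suppose each f_k : ℝ^d → ℝ is convex, L-smooth, and bounded below. Let the iterates be w_{t+1} = w_t - η d_t with constant step size η ≤ 1/L, where each d_t = J(w_t) λ_t for some λ_t in the probability simplex, and the vector of function values f(w_t) is componentwise monotonically decreasing in t. Then with λ̄ = (1/T) ∑_{t=0}^{T-1} λ_t, for every w ∈ ℝ^d: ⟨λ̄, f(w_T)⟩ - ⟨λ̄, f(w)⟩ ≤ ‖w_0 - w‖² / (2 η T). -/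
/-!
For each objective, the descent lemma (from `L`-smoothness) and the gradient inequality (from
convexity) give `f_k(w_{t+1}) - f_k(w) ≤ ⟪∇f_k(w_t), w_{t+1} - w⟫ + L/2 ‖w_{t+1} - w_t‖²`.
Averaging with the weights `λ_t` turns the gradients into `d_t`, and since `ηL ≤ 1` the right side
is at most `(‖w_t - w‖² - ‖w_{t+1} - w‖²) / (2η)`. Monotonicity lets us replace `f(w_{t+1})` by
`f(w_T)` for every `t < T`, and summing over `t` telescopes.
-/

open scoped RealInnerProductSpace NNReal
open Finset Set

section Smooth

variable {E : Type*} [NormedAddCommGroup E] [InnerProductSpace ℝ E]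

theorem LipschitzWith.inner_sub_add_smul_le {g : E → E} {K : ℝ≥0} (hg : LipschitzWith K g)
    (x v : E) {s : ℝ} (hs : 0 ≤ s) :
    ⟪g (x + s • v) - g x, v⟫ ≤ K * s * ‖v‖ ^ 2 :=
  calc ⟪g (x + s • v) - g x, v⟫ ≤ ‖g (x + s • v) - g x‖ * ‖v‖ := real_inner_le_norm _ _
    _ ≤ K * ‖x + s • v - x‖ * ‖v‖ := by
      gcongr
      simpa only [dist_eq_norm] using hg.dist_le_mul (x + s • v) x
    _ = K * s * ‖v‖ ^ 2 := by
      rw [add_sub_cancel_left, norm_smul, Real.norm_of_nonneg hs]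
      ring

variable [CompleteSpace E]

theorem HasGradientAt.hasDerivAt_add_smul {f : E → ℝ} {g x v : E} {s : ℝ}
    (hf : HasGradientAt f g (x + s • v)) :
    HasDerivAt (fun s : ℝ => f (x + s • v)) ⟪g, v⟫ s := by
  have hline : HasDerivAt (fun s : ℝ => x + s • v) v s := by
    simpa using ((hasDerivAt_id s).smul_const v).const_add x
  have := hf.hasFDerivAt.comp_hasDerivAt s hline
  simp only [InnerProductSpace.toDual_apply_apply] at this
  exact this

theorem ConvexOn.add_inner_le {f : E → ℝ} {g x : E} (hf : ConvexOn ℝ univ f)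
    (hg : HasGradientAt f g x) (z : E) :
    f x + ⟪g, z - x⟫ ≤ f z := by
  have hline : ConvexOn ℝ univ fun s : ℝ => f (x + s • (z - x)) := by
    simpa [Function.comp_def, AffineMap.lineMap_apply_module', add_comm]
      using hf.comp_affineMap (AffineMap.lineMap x z)
  have hslope := hline.le_slope_of_hasDerivAt (mem_univ 0) (mem_univ 1) zero_lt_one
    (HasGradientAt.hasDerivAt_add_smul (by simpa using hg))
  simp only [slope_def_field, one_smul, zero_smul, add_zero, add_sub_cancel, sub_zero,
    div_one] at hslope
  linarith

theorem le_add_inner_add_sq_of_lipschitzWith {f : E → ℝ} {g : E → E} {K : ℝ≥0}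
    (hf : ∀ x, HasGradientAt f (g x) x) (hg : LipschitzWith K g) (x y : E) :
    f y ≤ f x + ⟪g x, y - x⟫ + K / 2 * ‖y - x‖ ^ 2 := by
  set v := y - x
  set ψ : ℝ → ℝ := fun s => f (x + s • v) - s * ⟪g x, v⟫ - K / 2 * s ^ 2 * ‖v‖ ^ 2
  have hψ : ∀ s, HasDerivAt ψ (⟪g (x + s • v) - g x, v⟫ - K * s * ‖v‖ ^ 2) s := by
    intro s
    have hlin := (hasDerivAt_id s).mul_const ⟪g x, v⟫
    have hsq := ((hasDerivAt_pow 2 s).const_mul (K / 2 : ℝ)).mul_const (‖v‖ ^ 2)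
    exact (((hf (x + s • v)).hasDerivAt_add_smul.sub hlin).sub hsq).congr_deriv
      (by rw [inner_sub_left]; ring)
  have hanti : AntitoneOn ψ (Set.Ici 0) := by
    refine antitoneOn_of_hasDerivWithinAt_nonpos (convex_Ici 0)
      (fun s _ => (hψ s).continuousAt.continuousWithinAt) (fun s _ => (hψ s).hasDerivWithinAt)
      fun s hs => ?_
    rw [interior_Ici] at hs
    exact sub_nonpos.2 (hg.inner_sub_add_smul_le x v (le_of_lt hs))
  have h01 := hanti (Set.mem_Ici.2 le_rfl) (Set.mem_Ici.2 zero_le_one) zero_le_one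
  simp only [ψ, one_smul, zero_smul, add_zero, v, add_sub_cancel] at h01
  linarith

theorem ConvexOn.le_add_inner_add_sq_of_lipschitzWith {f : E → ℝ} {g : E → E} {K : ℝ≥0}
    (hconv : ConvexOn ℝ univ f) (hf : ∀ x, HasGradientAt f (g x) x) (hg : LipschitzWith K g)
    (x y z : E) :
    f y ≤ f z + ⟪g x, y - z⟫ + K / 2 * ‖y - x‖ ^ 2 := by
  have hlower := hconv.add_inner_le (hf x) z
  have hupper := _root_.le_add_inner_add_sq_of_lipschitzWith hf hg x y
  have hsplit : ⟪g x, y - z⟫ = ⟪g x, y - x⟫ - ⟪g x, z - x⟫ := by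
    rw [← inner_sub_right, sub_sub_sub_cancel_right]
  linarith

theorem sum_mul_sub_le_inner_sum_smul_add_sq {ι : Type*} [Fintype ι] {f : ι → E → ℝ}
    {g : ι → E → E} {K : ℝ≥0} (hconv : ∀ k, ConvexOn ℝ univ (f k))
    (hf : ∀ k x, HasGradientAt (f k) (g k x) x) (hg : ∀ k, LipschitzWith K (g k))
    {c : ι → ℝ} (hc0 : ∀ k, 0 ≤ c k) (hc1 : ∑ k, c k = 1) (x y z : E) :
    ∑ k, c k * (f k y - f k z) ≤ ⟪∑ k, c k • g k x, y - z⟫ + K / 2 * ‖y - x‖ ^ 2 :=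
  calc ∑ k, c k * (f k y - f k z)
      ≤ ∑ k, c k * (⟪g k x, y - z⟫ + K / 2 * ‖y - x‖ ^ 2) := by
        gcongr with k
        · exact hc0 k
        · linarith [(hconv k).le_add_inner_add_sq_of_lipschitzWith (hf k) (hg k) x y z]
    _ = ⟪∑ k, c k • g k x, y - z⟫ + K / 2 * ‖y - x‖ ^ 2 := by
        simp only [mul_add, sum_add_distrib, ← sum_mul, hc1, one_mul, sum_inner,
          real_inner_smul_left]

theorem sum_mul_sub_le_of_gradient_step {ι : Type*} [Fintype ι] {f : ι → E → ℝ}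
    {g : ι → E → E} {K : ℝ≥0} (hconv : ∀ k, ConvexOn ℝ univ (f k))
    (hf : ∀ k x, HasGradientAt (f k) (g k x) x) (hg : ∀ k, LipschitzWith K (g k))
    {c : ι → ℝ} (hc0 : ∀ k, 0 ≤ c k) (hc1 : ∑ k, c k = 1) {η : ℝ} (hη : 0 < η)
    (hKη : K * η ≤ 1) (x z : E) :
    let d := ∑ k, c k • g k x
    ∑ k, c k * (f k (x - η • d) - f k z) ≤ (‖x - z‖ ^ 2 - ‖x - η • d - z‖ ^ 2) / (2 * η) := by
  intro d
  have hsum := sum_mul_sub_le_inner_sum_smul_add_sq hconv hf hg hc0 hc1 x (x - η • d) z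
  have hinner : ⟪d, x - η • d - z⟫ = ⟪d, x - z⟫ - η * ‖d‖ ^ 2 := by
    rw [sub_right_comm, inner_sub_right, real_inner_smul_right, real_inner_self_eq_norm_sq]
  have hnorm_step : ‖x - η • d - x‖ ^ 2 = η ^ 2 * ‖d‖ ^ 2 := by
    rw [sub_sub_cancel_left, norm_neg, norm_smul, Real.norm_of_nonneg hη.le, mul_pow]
  have hdist : ‖x - η • d - z‖ ^ 2 = ‖x - z‖ ^ 2 - 2 * η * ⟪d, x - z⟫ + η ^ 2 * ‖d‖ ^ 2 := by
    rw [sub_right_comm, norm_sub_sq_real, real_inner_smul_right, real_inner_comm, norm_smul,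
      Real.norm_of_nonneg hη.le, mul_pow]
    ring
  have hquad : K / 2 * (η ^ 2 * ‖d‖ ^ 2) ≤ η / 2 * ‖d‖ ^ 2 := by
    have : (K : ℝ) * η ^ 2 ≤ η := by nlinarith
    nlinarith [sq_nonneg ‖d‖]
  rw [hdist, le_div_iff₀ (by positivity)]
  rw [hinner, hnorm_step] at hsum
  nlinarith

end Smooth

theorem stmt7_general {n m : ℕ} (f : Fin m → EuclideanSpace ℝ (Fin n) → ℝ)
    (gradf : Fin m → EuclideanSpace ℝ (Fin n) → EuclideanSpace ℝ (Fin n))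
    (L : ℝ) (hL : 0 < L)
    (hgrad : ∀ k x, HasGradientAt (f k) (gradf k x) x)
    (hlip : ∀ k, LipschitzWith L.toNNReal (gradf k))
    (hconv : ∀ k, ConvexOn ℝ Set.univ (f k))
    (η : ℝ) (hη0 : 0 < η) (hη1 : η ≤ 1 / L)
    (w d : ℕ → EuclideanSpace ℝ (Fin n)) (lam : ℕ → Fin m → ℝ)
    (hlam0 : ∀ t k, 0 ≤ lam t k) (hlam1 : ∀ t, ∑ k, lam t k = 1)
    (hd : ∀ t, d t = ∑ k, lam t k • gradf k (w t))
    (hstep : ∀ t, w (t + 1) = w t - η • d t)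
    (hmono : ∀ t k, f k (w (t + 1)) ≤ f k (w t))
    (T : ℕ) :
    ∀ z : EuclideanSpace ℝ (Fin n),
      ∑ k, ((1 / (T : ℝ)) * ∑ t ∈ range T, lam t k) * (f k (w T) - f k z) ≤
        ‖w 0 - z‖ ^ 2 / (2 * η * T) := by
  intro z
  have hLη : (L.toNNReal : ℝ) * η ≤ 1 := by
    rw [Real.coe_toNNReal L hL.le, mul_comm, ← le_div_iff₀ hL]
    exact hη1
  have hdescent : ∀ t, ∑ k, lam t k * (f k (w (t + 1)) - f k z) ≤
      (‖w t - z‖ ^ 2 - ‖w (t + 1) - z‖ ^ 2) / (2 * η) := fun t => by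
    rw [hstep t, hd t]
    exact sum_mul_sub_le_of_gradient_step hconv hgrad hlip (hlam0 t) (hlam1 t) hη0 hLη (w t) z
  have hanti : ∀ k, Antitone fun t => f k (w t) := fun k => antitone_nat_of_succ_le (hmono · k)
  calc ∑ k, ((1 / (T : ℝ)) * ∑ t ∈ range T, lam t k) * (f k (w T) - f k z)
      = 1 / T * ∑ t ∈ range T, ∑ k, lam t k * (f k (w T) - f k z) := by
        simp only [mul_assoc, sum_mul, mul_sum]
        exact sum_comm
    _ ≤ 1 / T * ∑ t ∈ range T, ∑ k, lam t k * (f k (w (t + 1)) - f k z) := by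
        gcongr with t ht k
        · exact hlam0 t k
        · exact hanti k (mem_range.1 ht)
    _ ≤ 1 / T * ∑ t ∈ range T, (‖w t - z‖ ^ 2 - ‖w (t + 1) - z‖ ^ 2) / (2 * η) := by
        gcongr with t
        exact hdescent t
    _ = 1 / T * ((‖w 0 - z‖ ^ 2 - ‖w T - z‖ ^ 2) / (2 * η)) := by
        rw [← sum_div, sum_range_sub' (fun t => ‖w t - z‖ ^ 2)]
    _ ≤ ‖w 0 - z‖ ^ 2 / (2 * η * T) := by
        rw [one_div_mul_eq_div, div_div]
        gcongr
        exact sub_le_self _ (sq_nonneg _)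

/-- convergence under monotone descent, convex case. -/
theorem stmt7 {n m : ℕ} (f : Fin m → EuclideanSpace ℝ (Fin n) → ℝ)
    (gradf : Fin m → EuclideanSpace ℝ (Fin n) → EuclideanSpace ℝ (Fin n))
    (L : ℝ) (hL : 0 < L)
    (hgrad : ∀ k x, HasGradientAt (f k) (gradf k x) x)
    (hlip : ∀ k, LipschitzWith L.toNNReal (gradf k))
    (hconv : ∀ k, ConvexOn ℝ Set.univ (f k))
    (hbdd : ∀ k, BddBelow (Set.range (f k)))
    (η : ℝ) (hη0 : 0 < η) (hη1 : η ≤ 1 / L)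
    (w d : ℕ → EuclideanSpace ℝ (Fin n)) (lam : ℕ → Fin m → ℝ)
    (hlam0 : ∀ t k, 0 ≤ lam t k) (hlam1 : ∀ t, ∑ k, lam t k = 1)
    (hd : ∀ t, d t = ∑ k, lam t k • gradf k (w t))
    (hstep : ∀ t, w (t + 1) = w t - η • d t)
    (hmono : ∀ t k, f k (w (t + 1)) ≤ f k (w t))
    (T : ℕ) (hT : 0 < T) :
    ∀ z : EuclideanSpace ℝ (Fin n),
      ∑ k, ((1 / (T : ℝ)) * ∑ t ∈ range T, lam t k) * (f k (w T) - f k z) ≤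
        ‖w 0 - z‖ ^ 2 / (2 * η * T) :=
  stmt7_general f gradf L hL hgrad hlip hconv η hη0 hη1 w d lam hlam0 hlam1 hd hstep hmono T
end

section
/- Fenchel conjugate of CVaR: for 0 < ε ≤ 1 define s(x) = CVaR_ε(x) = min_{α ∈ ℝ} { α + (1/(εm)) ∑_{k=1}^m max(0, -x_k - α) } for x ∈ ℝ^m. Then for λ ∈ ℝ^m, s*(-λ) = 0 if λ lies in the probability simplex and λ_k ≤ 1/(εm) for all k, and s*(-λ) = +∞ otherwise. -/
/-!
For `w` in the capped simplex `{w ∈ Δ : w_k ≤ c}` and every `α`, the pointwise bounds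
`w_k (-x_k - α) ≤ c · max 0 (-x_k - α)` sum to `-⟨w, x⟩ ≤ α + c ∑ max 0 (-x_k - α)`, so
`-⟨λ, x⟩ - CVaR(x) ≤ 0` with equality at `x = 0` when `λ` lies in it. Otherwise one of
`λ_j < 0`, `λ_j > c`, `∑ λ_k ≠ 1` holds, and along the rays `t e_j`, `-t e_j`, `±t 𝟙` the
quantity `-⟨λ, x⟩ - CVaR(x)` grows linearly in `t`. Since `ε ≤ 1`, the uniform weight lies in
the capped simplex, so the infimum defining CVaR is bounded below and not a junk value.
-/

open Finset Matrix Set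

variable {ι : Type*} [Fintype ι]

def cvarObjective (c : ℝ) (x : ι → ℝ) (α : ℝ) : ℝ := α + c * ∑ k, max 0 (-x k - α)

noncomputable def cvar (c : ℝ) (x : ι → ℝ) : ℝ := ⨅ α, cvarObjective c x α

def cappedSimplex (c : ℝ) : Set (ι → ℝ) := {w | w ∈ stdSimplex ℝ ι ∧ ∀ k, w k ≤ c}

noncomputable def fenchelConj (F : (ι → ℝ) → ℝ) (y : ι → ℝ) : EReal :=
  ⨆ x, ((y ⬝ᵥ x - F x : ℝ) : EReal)

lemma cappedSimplex_nonempty [Nonempty ι] {c : ℝ} (hc : 1 ≤ c * Fintype.card ι) :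
    (cappedSimplex (ι := ι) c).Nonempty := by
  have hcard : (0 : ℝ) < Fintype.card ι := by exact_mod_cast Fintype.card_pos
  refine ⟨fun _ ↦ (Fintype.card ι : ℝ)⁻¹, ⟨fun _ ↦ by positivity, ?_⟩, fun _ ↦ ?_⟩
  · simp [hcard.ne']
  · rw [inv_le_iff_one_le_mul₀ hcard]
    linarith

section cvar

variable {c : ℝ}

lemma neg_dotProduct_le_cvarObjective {w : ι → ℝ} (hw : w ∈ cappedSimplex c) (x : ι → ℝ)
    (α : ℝ) : -(w ⬝ᵥ x) ≤ cvarObjective c x α := by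
  obtain ⟨⟨hw0, hw1⟩, hwc⟩ := hw
  have hsum : ∑ k, w k * (-x k - α) = -(w ⬝ᵥ x) - α := by
    simp only [mul_sub, mul_neg, sum_sub_distrib, sum_neg_distrib, ← sum_mul, hw1, one_mul,
      dotProduct]
  have hle : ∑ k, w k * (-x k - α) ≤ c * ∑ k, max 0 (-x k - α) := by
    rw [mul_sum]
    refine sum_le_sum fun k _ ↦ ?_
    calc w k * (-x k - α) ≤ w k * max 0 (-x k - α) :=
          mul_le_mul_of_nonneg_left (le_max_right _ _) (hw0 k)
      _ ≤ c * max 0 (-x k - α) := mul_le_mul_of_nonneg_right (hwc k) (le_max_left _ _)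
  unfold cvarObjective
  linarith

lemma neg_dotProduct_le_cvar {w : ι → ℝ} (hw : w ∈ cappedSimplex c) (x : ι → ℝ) :
    -(w ⬝ᵥ x) ≤ cvar c x :=
  le_ciInf (neg_dotProduct_le_cvarObjective hw x)

lemma cvar_le_cvarObjective (hc : (cappedSimplex (ι := ι) c).Nonempty) (x : ι → ℝ) (α : ℝ) :
    cvar c x ≤ cvarObjective c x α := by
  obtain ⟨w, hw⟩ := hc
  exact ciInf_le ⟨_, forall_mem_range.2 (neg_dotProduct_le_cvarObjective hw x)⟩ α

lemma cvar_le_mul_sum_max (hc : (cappedSimplex (ι := ι) c).Nonempty) (x : ι → ℝ) :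
    cvar c x ≤ c * ∑ k, max 0 (-x k) := by
  simpa [cvarObjective] using cvar_le_cvarObjective hc x 0

lemma cvar_nonpos_of_nonneg (hc : (cappedSimplex (ι := ι) c).Nonempty) {x : ι → ℝ} (hx : 0 ≤ x) :
    cvar c x ≤ 0 := by
  refine (cvar_le_mul_sum_max hc x).trans (le_of_eq ?_)
  rw [sum_eq_zero fun k _ ↦ max_eq_left (neg_nonpos.2 (hx k)), mul_zero]

lemma cvar_single_neg_le [DecidableEq ι] (hc : (cappedSimplex (ι := ι) c).Nonempty) (j : ι)
    {t : ℝ} (ht : 0 ≤ t) : cvar c (Pi.single j (-t)) ≤ c * t := by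
  refine (cvar_le_mul_sum_max hc _).trans (le_of_eq ?_)
  rw [sum_eq_single j (fun k _ hk ↦ by simp [hk]) (by simp)]
  simp [ht]

lemma cvar_smul_one (hc : (cappedSimplex (ι := ι) c).Nonempty) (t : ℝ) :
    cvar c (t • (1 : ι → ℝ)) = -t := by
  obtain ⟨w, hw⟩ := hc
  refine le_antisymm ?_ ?_
  · simpa [cvarObjective] using cvar_le_cvarObjective ⟨w, hw⟩ (t • 1) (-t)
  · simpa [dotProduct_smul, dotProduct_one, hw.1.2] using neg_dotProduct_le_cvar hw (t • 1)

end cvar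

section fenchelConj

variable {F : (ι → ℝ) → ℝ} {y : ι → ℝ}

lemma fenchelConj_eq_zero (hF : ∀ x, y ⬝ᵥ x ≤ F x) (hF0 : F 0 ≤ 0) : fenchelConj F y = 0 := by
  refine le_antisymm (iSup_le fun x ↦ EReal.coe_nonpos.2 (sub_nonpos.2 (hF x))) ?_
  refine le_trans ?_ (le_iSup _ 0)
  exact EReal.coe_nonneg.2 (by simpa using hF0)

lemma fenchelConj_eq_top_of_linear_growth (x : ℝ → ι → ℝ) {a : ℝ} (ha : 0 < a)
    (h : ∀ t, 0 ≤ t → a * t ≤ y ⬝ᵥ x t - F (x t)) : fenchelConj F y = ⊤ := by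
  refine iSup_eq_top.2 fun b hb ↦ ?_
  obtain ⟨r, hbr, -⟩ := EReal.exists_between_coe_real hb
  refine ⟨x (|r| / a), hbr.trans_le (EReal.coe_le_coe_iff.2 ?_)⟩
  calc r ≤ |r| := le_abs_self r
    _ = a * (|r| / a) := by field_simp
    _ ≤ _ := h _ (by positivity)

end fenchelConj

section conjugate

variable {c : ℝ} {lam : ι → ℝ}

theorem fenchelConj_cvar_neg_of_mem (hlam : lam ∈ cappedSimplex c) :
    fenchelConj (cvar c) (-lam) = 0 :=
  fenchelConj_eq_zero (fun x ↦ by simpa [neg_dotProduct] using neg_dotProduct_le_cvar hlam x)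
    (cvar_nonpos_of_nonneg ⟨lam, hlam⟩ le_rfl)

theorem fenchelConj_cvar_neg_of_notMem (hc : (cappedSimplex (ι := ι) c).Nonempty)
    (hlam : lam ∉ cappedSimplex c) : fenchelConj (cvar c) (-lam) = ⊤ := by
  classical
  simp only [cappedSimplex, stdSimplex, mem_ofPred_eq, not_and_or, not_forall, not_le] at hlam
  rcases hlam with (⟨j, hj⟩ | hsum) | ⟨j, hj⟩
  · refine fenchelConj_eq_top_of_linear_growth (fun t ↦ Pi.single j t) (neg_pos.2 hj)
      fun t ht ↦ ?_
    have := cvar_nonpos_of_nonneg hc ((Pi.single_nonneg (i := j)).2 ht)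
    simp only [dotProduct_single, Pi.neg_apply]
    linarith
  · rcases lt_or_gt_of_ne hsum with hlt | hgt
    · refine fenchelConj_eq_top_of_linear_growth (fun t ↦ t • 1) (sub_pos.2 hlt) fun t _ ↦ ?_
      simp only [cvar_smul_one hc, dotProduct_smul, dotProduct_one, Pi.neg_apply, sum_neg_distrib,
        smul_eq_mul]
      linarith
    · refine fenchelConj_eq_top_of_linear_growth (fun t ↦ (-t) • 1) (sub_pos.2 hgt) fun t _ ↦ ?_
      simp only [cvar_smul_one hc, dotProduct_smul, dotProduct_one, Pi.neg_apply, sum_neg_distrib,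
        smul_eq_mul]
      linarith
  · refine fenchelConj_eq_top_of_linear_growth (fun t ↦ Pi.single j (-t)) (sub_pos.2 hj)
      fun t ht ↦ ?_
    have := cvar_single_neg_le hc j ht
    simp only [dotProduct_single, Pi.neg_apply]
    linarith

end conjugate

/-- the Fenchel conjugate of `CVaR_ε` is the indicator of the
capped simplex `{λ ∈ Δ : λ_k ≤ 1/(εm)}`. -/
theorem stmt10 (m : ℕ) (hm : 0 < m) (ε : ℝ) (hε0 : 0 < ε) (hε1 : ε ≤ 1)
    (s : (Fin m → ℝ) → ℝ)
    (hs : ∀ x : Fin m → ℝ,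
      s x = ⨅ α : ℝ, (α + (1 / (ε * m)) * ∑ k, max 0 (-x k - α)))
    (sstar : (Fin m → ℝ) → EReal)
    (hsstar : ∀ y : Fin m → ℝ,
      sstar y = ⨆ x : Fin m → ℝ, (((∑ k, y k * x k) - s x : ℝ) : EReal))
    (lam : Fin m → ℝ) :
    (((∀ k, 0 ≤ lam k) ∧ (∑ k, lam k = 1) ∧ (∀ k, lam k ≤ 1 / (ε * m))) →
        sstar (-lam) = 0) ∧
    (¬ ((∀ k, 0 ≤ lam k) ∧ (∑ k, lam k = 1) ∧ (∀ k, lam k ≤ 1 / (ε * m))) →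
        sstar (-lam) = ⊤) := by
  obtain rfl : s = cvar (1 / (ε * m)) := funext hs
  obtain rfl : sstar = fenchelConj (cvar (1 / (ε * m))) := funext hsstar
  have : Nonempty (Fin m) := ⟨⟨0, hm⟩⟩
  have hc : (cappedSimplex (1 / (ε * m)) : Set (Fin m → ℝ)).Nonempty := by
    refine cappedSimplex_nonempty ?_
    rw [Fintype.card_fin, one_div, mul_inv, mul_assoc, inv_mul_cancel₀ (by positivity), mul_one]
    exact one_le_inv₀ hε0 |>.2 hε1
  have hmem : lam ∈ cappedSimplex (1 / (ε * m)) ↔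
      (∀ k, 0 ≤ lam k) ∧ (∑ k, lam k = 1) ∧ (∀ k, lam k ≤ 1 / (ε * m)) := and_assoc
  exact ⟨fun h ↦ fenchelConj_cvar_neg_of_mem (hmem.2 h),
    fun h ↦ fenchelConj_cvar_neg_of_notMem hc (mt hmem.1 h)⟩
end

section
/- MGDA non-conflicting property: let g_1, …, g_m ∈ ℝ^d, and let λ* minimize λ ↦ ‖∑_k λ_k g_k‖² over the probability simplex Δ. Then d = ∑_k λ*_k g_k satisfies ⟨d, g_k⟩ ≥ ‖d‖² for every k. In particular d is non-conflicting: ⟨d, g_k⟩ ≥ 0 for all k. -/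
open scoped RealInnerProductSpace

/-- `v` is the nearest point of `K` to `0`, so the variational inequality
`⟪0 - v, w - v⟫ ≤ 0` of the projection onto `K` applies. -/
theorem IsMinOn.sq_norm_le_inner_of_convex {F : Type*} [NormedAddCommGroup F]
    [InnerProductSpace ℝ F] {K : Set F} (hK : Convex ℝ K) {v : F} (hv : v ∈ K)
    (hmin : IsMinOn (‖·‖) K v) {w : F} (hw : w ∈ K) : ‖v‖ ^ 2 ≤ ⟪v, w⟫ := by
  have : Nonempty K := ⟨⟨v, hv⟩⟩
  have hinf : ‖0 - v‖ = ⨅ w : K, ‖0 - (w : F)‖ := by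
    simp only [zero_sub, norm_neg]
    have hbdd : BddBelow (Set.range fun w : K ↦ ‖(w : F)‖) :=
      ⟨0, Set.forall_mem_range.2 fun _ ↦ norm_nonneg _⟩
    exact le_antisymm (le_ciInf fun w ↦ hmin w.2) (ciInf_le hbdd ⟨v, hv⟩)
  have hvar := (norm_eq_iInf_iff_real_inner_le_zero hK hv).1 hinf w hw
  rw [zero_sub, inner_neg_left, inner_sub_right, real_inner_self_eq_norm_sq] at hvar
  linarith

/-- the MGDA minimum-norm direction is non-conflicting, and even
satisfies ⟪d, g_k⟫ ≥ ‖d‖² for every k. -/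
theorem stmt13 {n m : ℕ} (g : Fin m → EuclideanSpace ℝ (Fin n))
    (lamstar : Fin m → ℝ)
    (hlam0 : ∀ k, 0 ≤ lamstar k) (hlam1 : ∑ k, lamstar k = 1)
    (hopt : ∀ lam : Fin m → ℝ, (∀ k, 0 ≤ lam k) → (∑ k, lam k = 1) →
      ‖∑ k, lamstar k • g k‖ ^ 2 ≤ ‖∑ k, lam k • g k‖ ^ 2)
    (d : EuclideanSpace ℝ (Fin n)) (hd : d = ∑ k, lamstar k • g k) :
    (∀ k, ‖d‖ ^ 2 ≤ ⟪d, g k⟫) ∧ (∀ k, 0 ≤ ⟪d, g k⟫) := by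
  set K := Fintype.linearCombination ℝ g '' stdSimplex ℝ (Fin m)
  have hK : Convex ℝ K := (convex_stdSimplex ℝ _).linear_image _
  have hdK : d ∈ K :=
    ⟨lamstar, ⟨hlam0, hlam1⟩, by rw [Fintype.linearCombination_apply, hd]⟩
  have hmin : IsMinOn (‖·‖) K d := by
    rintro _ ⟨lam, ⟨hlam0, hlam1⟩, rfl⟩
    rw [Set.mem_ofPred_eq, Fintype.linearCombination_apply, hd]
    exact (pow_le_pow_iff_left₀ (norm_nonneg _) (norm_nonneg _) two_ne_zero).1
      (hopt lam hlam0 hlam1)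
  have hgK (k : Fin m) : g k ∈ K :=
    ⟨Pi.single k 1, single_mem_stdSimplex ℝ k,
      by simp [Fintype.linearCombination_apply_single]⟩
  have key (k : Fin m) : ‖d‖ ^ 2 ≤ ⟪d, g k⟫ :=
    hmin.sq_norm_le_inner_of_convex hK hdK (hgK k)
  exact ⟨key, fun k ↦ (sq_nonneg _).trans (key k)⟩
end

section
/- Counterexample-free regime for projection-based aggregation: let J ∈ ℝ^{d×m} with columns g_1, …, g_m, let q ∈ conv{g_1, …, g_m}, and let d = P_{cone*(J)}(q) be the projection of q onto the dual cone cone*(J) = {v : ⟨v, g_k⟩ ≥ 0 ∀k}. Then, with F = ∑_k f_k interpreted via its gradient ∇F(w) = ∑_k g_k when g_k = ∇f_k(w), we have ⟨d, ∑_k g_k⟩ ≥ ‖d‖². (I.e., the alignment condition ⟨d, ∇F(w)⟩ ≥ c‖d‖² holds with c = 1.) -/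
/-!
The variational inequality of the metric projection `d` of `q` onto a convex set containing `0`,
tested against the point `0`, gives `‖d‖² ≤ ⟪q, d⟫`. As `q` is a convex combination of the `g k`
and `d` lies in their dual cone, `⟪q, d⟫ = ∑ μ k ⟪d, g k⟫ ≤ ∑ ⟪d, g k⟫`.
-/

open scoped RealInnerProductSpace
open Finset

theorem norm_sq_le_inner_of_forall_norm_sub_le {F : Type*} [NormedAddCommGroup F]
    [InnerProductSpace ℝ F] {K : Set F} (hK : Convex ℝ K) (h0 : (0 : F) ∈ K) {q d : F}
    (hd : d ∈ K) (hmin : ∀ y ∈ K, ‖q - d‖ ≤ ‖q - y‖) : ‖d‖ ^ 2 ≤ ⟪q, d⟫ := by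
  have : Nonempty K := ⟨⟨d, hd⟩⟩
  have hinf : ‖q - d‖ = ⨅ w : K, ‖q - w‖ :=
    le_antisymm (le_ciInf fun w ↦ hmin w w.2)
      (ciInf_le ⟨0, Set.forall_mem_range.2 fun _ ↦ norm_nonneg _⟩ (⟨d, hd⟩ : K))
  have := (norm_eq_iInf_iff_real_inner_le_zero hK hd).1 hinf 0 h0
  rw [zero_sub, inner_neg_right, inner_sub_left, real_inner_self_eq_norm_sq] at this
  linarith

theorem inner_sum_smul_le_inner_sum {E ι : Type*} [NormedAddCommGroup E]
    [InnerProductSpace ℝ E] (s : Finset ι) (g : ι → E) {μ : ι → ℝ} (d : E)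
    (hμ : ∀ k ∈ s, μ k ≤ 1) (hd : ∀ k ∈ s, 0 ≤ ⟪d, g k⟫) :
    ⟪d, ∑ k ∈ s, μ k • g k⟫ ≤ ⟪d, ∑ k ∈ s, g k⟫ := by
  simp only [inner_sum, real_inner_smul_right]
  exact sum_le_sum fun k hk ↦ mul_le_of_le_one_left (hd k hk) (hμ k hk)

/-- the projection onto the dual cone of a point in the convex
hull of the gradients satisfies the alignment condition with c = 1. -/
theorem stmt19 {n m : ℕ} (g : Fin m → EuclideanSpace ℝ (Fin n))
    (μ : Fin m → ℝ) (hμ0 : ∀ k, 0 ≤ μ k) (hμ1 : ∑ k, μ k = 1)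
    (q : EuclideanSpace ℝ (Fin n)) (hq : q = ∑ k, μ k • g k)
    (d : EuclideanSpace ℝ (Fin n))
    -- d is the Euclidean (metric) projection of q onto the dual cone cone*(J):
    (hdmem : ∀ k, 0 ≤ ⟪d, g k⟫)
    (hdproj : ∀ y : EuclideanSpace ℝ (Fin n), (∀ k, 0 ≤ ⟪y, g k⟫) → ‖q - d‖ ≤ ‖q - y‖) :
    ‖d‖ ^ 2 ≤ ⟪d, ∑ k, g k⟫ := by
  have mem_dual : ∀ y, y ∈ ProperCone.innerDual (Set.range g) ↔ ∀ k, 0 ≤ ⟪y, g k⟫ := by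
    simp [real_inner_comm]
  have hμ_le_one : ∀ k ∈ univ, μ k ≤ 1 := fun k hk ↦
    hμ1 ▸ single_le_sum (fun i _ ↦ hμ0 i) hk
  calc ‖d‖ ^ 2 ≤ ⟪q, d⟫ :=
        norm_sq_le_inner_of_forall_norm_sub_le (ProperCone.convex _) (zero_mem _)
          ((mem_dual d).2 hdmem) fun y hy ↦ hdproj y ((mem_dual y).1 hy)
    _ = ⟪d, ∑ k, μ k • g k⟫ := by rw [real_inner_comm, hq]
    _ ≤ ⟪d, ∑ k, g k⟫ := inner_sum_smul_le_inner_sum _ _ _ hμ_le_one fun k _ ↦ hdmem k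
end
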